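/- Let G be a weakly closed finite simple graph. Then G contains no induced cycle of length 5 or more: for every k ≥ 5 there is no graph embedding (injective map preserving both adjacency and non-adjacency) of the cycle graph C_k into G. -/

import Mathlib

/-- `G` is weakly closed: some labeling of the vertices by `1, …, n` is such that for
every edge `{i, j}` with `i < j` and every `i < k < j`, `{i,k} ∈ E(G)` or `{k,j} ∈ E(G)`. -/
def WeaklyClosed {V : Type*} [Fintype V] (G : SimpleGraph V) : Prop :=
  ∃ σ : V ≃ Fin (Fintype.card V), ∀ i j k : V,
    G.Adj i j → σ i < σ k → σ k < σ j → G.Adj i k ∨ G.Adj k j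

/-!
Let `v` be the vertex of an induced cycle `… b – v – a – c …` (length at least 5) with the
smallest label, and suppose the label of `a` is below that of `b`. The edge `vb` spans `c`
unless `c` is labelled above `b`, since `c` is adjacent to neither `v` nor `b`; but then the
edge `ac` spans `b`, which is adjacent to neither `a` nor `c`. So the label of `b` is below
that of `a`, and by the symmetric argument also above it.
-/

open SimpleGraph Fin.CommRing

namespace SimpleGraph

variable {V α : Type*} [LinearOrder α]

def IsWeaklyClosedLabeling (G : SimpleGraph V) (σ : V → α) : Prop :=
  ∀ i j k : V, G.Adj i j → σ i < σ k → σ k < σ j → G.Adj i k ∨ G.Adj k j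

theorem IsWeaklyClosedLabeling.not_lt_of_adj_of_adj {G : SimpleGraph V} {σ : V → α}
    (hG : G.IsWeaklyClosedLabeling σ) {v a b c : V} (hvb : G.Adj v b) (hac : G.Adj a c)
    (hvc : ¬ G.Adj v c) (hab : ¬ G.Adj a b) (hbc : ¬ G.Adj b c)
    (hσvc : σ v < σ c) (hσbc : σ b ≠ σ c) : ¬ σ a < σ b := by
  intro hσab
  have hσcb : σ b < σ c := by
    refine lt_of_le_of_ne (not_lt.mp fun hσcb => ?_) hσbc
    exact (hG v b c hvb hσvc hσcb).elim hvc fun hcb => hbc hcb.symm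
  exact (hG a c b hac hσab hσcb).elim hab hbc

variable {n : ℕ}

def cycleGraphAddLeftIso (t : Fin (n + 2)) : cycleGraph (n + 2) ≃g cycleGraph (n + 2) where
  toEquiv := Equiv.addLeft t
  map_rel_iff' := by simp [cycleGraph_adj]

def cycleGraphNegIso : cycleGraph (n + 2) ≃g cycleGraph (n + 2) where
  toEquiv := Equiv.neg _
  map_rel_iff' := by simp [cycleGraph_adj, neg_add_eq_sub, or_comm]

theorem IsWeaklyClosedLabeling.lt_of_cycleGraph_embedding {G : SimpleGraph V} {σ : V → α}
    (hG : G.IsWeaklyClosedLabeling σ) (hσ : Function.Injective σ)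
    (ψ : cycleGraph (n + 5) ↪g G) (hmin : ∀ x, σ (ψ 0) ≤ σ (ψ x)) :
    σ (ψ (-1)) < σ (ψ 1) := by
  have hvc_ne : (0 : Fin (n + 5)) ≠ 2 := by simp [Fin.ext_iff, Nat.mod_eq_of_lt]
  have hab_ne : (1 : Fin (n + 5)) ≠ -1 := by simp [Fin.ext_iff, Nat.mod_eq_of_lt, Fin.val_neg]
  have hbc_ne : (-1 : Fin (n + 5)) ≠ 2 := by simp [Fin.ext_iff, Nat.mod_eq_of_lt, Fin.val_neg]
  have hvb : (cycleGraph (n + 5)).Adj 0 (-1) := by simp [cycleGraph_adj]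
  have hac : (cycleGraph (n + 5)).Adj 1 2 := by rw [cycleGraph_adj]; ring_nf; simp
  have hvc : ¬ (cycleGraph (n + 5)).Adj 0 2 := by
    rw [cycleGraph_adj]; ring_nf; simp [Fin.ext_iff, Nat.mod_eq_of_lt, Fin.val_neg]
  have hab : ¬ (cycleGraph (n + 5)).Adj 1 (-1) := by
    rw [cycleGraph_adj]; ring_nf; simp [Fin.ext_iff, Nat.mod_eq_of_lt, Fin.val_neg]
  have hbc : ¬ (cycleGraph (n + 5)).Adj (-1) 2 := by
    rw [cycleGraph_adj]; ring_nf; simp [Fin.ext_iff, Nat.mod_eq_of_lt, Fin.val_neg]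
  have hσne {x y} (hxy : x ≠ y) : σ (ψ x) ≠ σ (ψ y) := hσ.ne (ψ.injective.ne hxy)
  refine lt_of_le_of_ne (not_lt.mp ?_) (hσne hab_ne.symm)
  exact hG.not_lt_of_adj_of_adj (ψ.map_adj_iff.mpr hvb) (ψ.map_adj_iff.mpr hac)
    (mt ψ.map_adj_iff.mp hvc) (mt ψ.map_adj_iff.mp hab) (mt ψ.map_adj_iff.mp hbc)
    ((hmin 2).lt_of_ne (hσne hvc_ne)) (hσne hbc_ne)

end SimpleGraph

theorem no_induced_long_cycle_of_weaklyClosed {V : Type*} [Fintype V] (G : SimpleGraph V)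
    (h : WeaklyClosed G) (m : ℕ) (hm : 5 ≤ m) :
    IsEmpty (SimpleGraph.cycleGraph m ↪g G) := by
  obtain ⟨σ, hσ : G.IsWeaklyClosedLabeling σ⟩ := h
  obtain ⟨n, rfl⟩ : ∃ n, m = n + 5 := ⟨m - 5, by omega⟩
  refine ⟨fun φ => ?_⟩
  obtain ⟨t, -, ht⟩ := Finset.exists_min_image Finset.univ (σ ∘ φ) Finset.univ_nonempty
  have hmin (f : cycleGraph (n + 5) ≃g cycleGraph (n + 5)) (hf : f 0 = t) (x : Fin (n + 5)) :
      σ (φ (f 0)) ≤ σ (φ (f x)) :=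
    hf ▸ ht _ (Finset.mem_univ _)
  have h₁ : σ (φ (t + -1)) < σ (φ (t + 1)) := hσ.lt_of_cycleGraph_embedding σ.injective
    (φ.comp (cycleGraphAddLeftIso t).toEmbedding) (hmin _ (add_zero t))
  have h₂ : σ (φ (t + - -1)) < σ (φ (t + -1)) := hσ.lt_of_cycleGraph_embedding σ.injective
    (φ.comp ((cycleGraphAddLeftIso t).comp cycleGraphNegIso).toEmbedding)
    (hmin _ (by simp [cycleGraphNegIso, cycleGraphAddLeftIso]))
  rw [neg_neg] at h₂
  exact lt_asymm h₁ h₂
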